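/- Fix p ∈ [1,∞). For k ∈ (0,1) with k² < 1, define f_k, g : (-1,0) → ℝ by f_k(ẑ) := (1/(k²(1−k²))) · ((1−|ẑ|^{k²}) − k²(1−|ẑ|))/(1−|ẑ|)² and g(ẑ) := (−1−ẑ−ln|ẑ|)/(1−|ẑ|)², where |ẑ| := −ẑ and |ẑ|^{k²} is the real power. Then ∫_{-1}^{0} |f_k(ẑ) − g(ẑ)|^p dẑ → 0 as k → 0⁺. -/

import Mathlib

open Real Set Filter MeasureTheory Topology
open scoped Interval

/-!
With `a = k²` and `t = -ẑ ∈ (0, 1)`, the weight `f_k` is `rescaledWeight a t` and `g` is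
`limitProfile t`. Pointwise `(1 - t ^ a) / a → -log t`, the derivative of `a ↦ t ^ a` at `0`,
so `f_k → g`. For `a ≤ 1/2`, Bernoulli's inequality `t ^ a ≤ 1 - a (1 - t)` and
`1 - t ^ a ≤ -a log t` give `0 ≤ f_k ≤ 2 g`, while
`g ≤ 1 - log t ≤ (1 + 2p) t ^ (-1/(2p))`. Hence `|f_k - g| ^ p` is dominated by a multiple
of the integrable `t ^ (-1/2)`, and dominated convergence concludes.
-/

noncomputable def rescaledWeight (a t : ℝ) : ℝ :=
  1 / (a * (1 - a)) * ((1 - t ^ a) - a * (1 - t)) / (1 - t) ^ 2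

noncomputable def limitProfile (t : ℝ) : ℝ :=
  (t - 1 - log t) / (1 - t) ^ 2

lemma tendsto_one_sub_rpow_div {t : ℝ} (ht : 0 < t) :
    Tendsto (fun a => (1 - t ^ a) / a) (𝓝[>] 0) (𝓝 (-log t)) := by
  have h := ((hasStrictDerivAt_const_rpow ht 0).hasDerivAt.tendsto_slope_zero_right).neg
  simp only [zero_add, rpow_zero, one_mul, smul_eq_mul] at h
  refine h.congr fun a => ?_
  ring

lemma tendsto_rescaledWeight {t : ℝ} (ht : 0 < t) :
    Tendsto (fun a => rescaledWeight a t) (𝓝[>] 0) (𝓝 (limitProfile t)) := by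
  have hlim : Tendsto (fun a => 1 / (1 - a) * ((1 - t ^ a) / a - (1 - t)) / (1 - t) ^ 2)
      (𝓝[>] 0) (𝓝 (1 / (1 - 0) * (-log t - (1 - t)) / (1 - t) ^ 2)) := by
    refine (((tendsto_const_nhds.div ?_ (by norm_num)).mul
      ((tendsto_one_sub_rpow_div ht).sub_const _)).div_const _)
    exact (tendsto_const_nhds.sub tendsto_id).mono_left nhdsWithin_le_nhds
  rw [show 1 / (1 - 0) * (-log t - (1 - t)) / (1 - t) ^ 2 = limitProfile t by
    unfold limitProfile; ring] at hlim
  refine hlim.congr' ?_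
  filter_upwards [self_mem_nhdsWithin] with a (ha : 0 < a)
  unfold rescaledWeight
  field_simp

lemma one_sub_le_neg_log {t : ℝ} (ht : 0 < t) : 1 - t ≤ -log t := by
  linarith [log_le_sub_one_of_pos ht]

lemma neg_log_mul_le_one_sub {t : ℝ} (ht : 0 < t) : -log t * t ≤ 1 - t := by
  have h := log_le_sub_one_of_pos (inv_pos.mpr ht)
  rw [log_inv] at h
  have := mul_le_mul_of_nonneg_right h ht.le
  rwa [sub_mul, inv_mul_cancel₀ ht.ne', one_mul] at this

lemma limitProfile_nonneg {t : ℝ} (ht : 0 < t) : 0 ≤ limitProfile t :=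
  div_nonneg (by linarith [one_sub_le_neg_log ht]) (sq_nonneg _)

lemma limitProfile_le_one_sub_log {t : ℝ} (ht₀ : 0 < t) (ht₁ : t < 1) :
    limitProfile t ≤ 1 - log t := by
  have hu : 0 < 1 - t := by linarith
  have h := neg_log_mul_le_one_sub ht₀
  rw [limitProfile, div_le_iff₀ (by positivity)]
  nlinarith [mul_le_mul_of_nonneg_left h hu.le, one_sub_le_neg_log ht₀]

lemma rpow_le_one_sub_mul {a t : ℝ} (ht : 0 ≤ t) (ha₀ : 0 ≤ a) (ha₁ : a ≤ 1) :
    t ^ a ≤ 1 - a * (1 - t) := by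
  have h := rpow_one_add_le_one_add_mul_self (s := t - 1) (by linarith) ha₀ ha₁
  rw [add_sub_cancel] at h
  linarith

lemma one_sub_rpow_le_mul_neg_log {a t : ℝ} (ht : 0 < t) : 1 - t ^ a ≤ a * -log t := by
  have h := add_one_le_exp (log t * a)
  rw [← rpow_def_of_pos ht] at h
  linarith

lemma rescaledWeight_nonneg {a t : ℝ} (ht : 0 ≤ t) (ha₀ : 0 < a) (ha₁ : a < 1) :
    0 ≤ rescaledWeight a t := by
  have hbernoulli := rpow_le_one_sub_mul ht ha₀.le ha₁.le
  have hden : 0 < a * (1 - a) := mul_pos ha₀ (by linarith)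
  unfold rescaledWeight
  apply div_nonneg _ (sq_nonneg _)
  apply mul_nonneg (by positivity)
  linarith

lemma rescaledWeight_le_two_mul_limitProfile {a t : ℝ} (ht : 0 < t) (ha₀ : 0 < a)
    (ha₁ : a ≤ 1 / 2) : rescaledWeight a t ≤ 2 * limitProfile t := by
  have hinv : 1 / (a * (1 - a)) ≤ 2 / a := by
    rw [div_le_div_iff₀ (mul_pos ha₀ (by linarith)) ha₀]
    nlinarith
  have hnum₀ : 0 ≤ (1 - t ^ a) - a * (1 - t) := by
    linarith [rpow_le_one_sub_mul ht.le ha₀.le (by linarith : a ≤ 1)]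
  have hnum : (1 - t ^ a) - a * (1 - t) ≤ a * (t - 1 - log t) := by
    linarith [one_sub_rpow_le_mul_neg_log (a := a) ht]
  unfold rescaledWeight limitProfile
  rw [mul_div_assoc']
  refine div_le_div_of_nonneg_right ?_ (sq_nonneg _)
  calc _ ≤ 2 / a * (a * (t - 1 - log t)) :=
        mul_le_mul hinv hnum hnum₀ (by positivity)
    _ = _ := by field_simp

lemma one_sub_log_le_rpow {t ε : ℝ} (ht₀ : 0 < t) (ht₁ : t ≤ 1) (hε : 0 < ε) :
    1 - log t ≤ (1 + ε⁻¹) * t ^ (-ε) := by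
  have hlog := log_le_rpow_div (inv_pos.mpr ht₀).le hε
  rw [log_inv, inv_rpow ht₀.le, ← rpow_neg ht₀.le] at hlog
  have hone : 1 ≤ t ^ (-ε) := one_le_rpow_of_pos_of_le_one_of_nonpos ht₀ ht₁ (by linarith)
  rw [div_eq_inv_mul] at hlog
  nlinarith

lemma abs_rescaledWeight_sub_limitProfile_le {a t : ℝ} (ht₀ : 0 < t) (ht₁ : t < 1)
    (ha₀ : 0 < a) (ha₁ : a ≤ 1 / 2) :
    |rescaledWeight a t - limitProfile t| ≤ 2 * (1 - log t) := by
  have hB := limitProfile_nonneg ht₀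
  calc _ ≤ 2 * limitProfile t :=
        abs_sub_le_of_nonneg_of_le (rescaledWeight_nonneg ht₀.le ha₀ (by linarith))
          (rescaledWeight_le_two_mul_limitProfile ht₀ ha₀ ha₁) hB (by linarith)
    _ ≤ 2 * (1 - log t) := by gcongr; exact limitProfile_le_one_sub_log ht₀ ht₁

lemma rpow_abs_rescaledWeight_sub_limitProfile_le {a p t : ℝ} (hp : 0 < p) (ht₀ : 0 < t)
    (ht₁ : t < 1) (ha₀ : 0 < a) (ha₁ : a ≤ 1 / 2) :
    |rescaledWeight a t - limitProfile t| ^ p ≤ (2 * (1 + 2 * p)) ^ p * t ^ (-(1 / 2) : ℝ) := by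
  have hlog := one_sub_log_le_rpow ht₀ ht₁.le (show 0 < 1 / (2 * p) by positivity)
  rw [one_div, inv_inv] at hlog
  calc _ ≤ (2 * (1 + 2 * p) * t ^ (-(2 * p)⁻¹)) ^ p := by
        gcongr
        linarith [abs_rescaledWeight_sub_limitProfile_le ht₀ ht₁ ha₀ ha₁]
    _ = _ := by
        rw [mul_rpow (by positivity) (by positivity), ← rpow_mul ht₀.le]
        congr 2
        field_simp

theorem tendsto_intervalIntegral_rpow_abs_rescaledWeight_sub_limitProfile {p : ℝ}
    (hp : 0 < p) :
    Tendsto (fun a => ∫ z in (-1 : ℝ)..0, |rescaledWeight a (-z) - limitProfile (-z)| ^ p)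
      (𝓝[>] 0) (𝓝 0) := by
  have hmem : ∀ᵐ z : ℝ, z ∈ Ι (-1 : ℝ) 0 → 0 < -z ∧ -z < 1 := by
    filter_upwards [volume.ae_ne 0] with z hz hzI
    rw [uIoc_of_le (by norm_num)] at hzI
    exact ⟨by linarith [lt_of_le_of_ne hzI.2 hz], by linarith [hzI.1]⟩
  have hmeas : ∀ a, AEStronglyMeasurable
      (fun z => |rescaledWeight a (-z) - limitProfile (-z)| ^ p)
      (volume.restrict (Ι (-1 : ℝ) 0)) :=
    fun a => by
      unfold rescaledWeight limitProfile
      exact Measurable.aestronglyMeasurable (by fun_prop)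
  have hbound : ∀ᶠ a in 𝓝[>] (0 : ℝ), ∀ᵐ z : ℝ, z ∈ Ι (-1 : ℝ) 0 →
      ‖|rescaledWeight a (-z) - limitProfile (-z)| ^ p‖
        ≤ (2 * (1 + 2 * p)) ^ p * (-z) ^ (-(1 / 2) : ℝ) := by
    filter_upwards [Ioc_mem_nhdsGT (show (0 : ℝ) < 1 / 2 by norm_num)] with a ha
    filter_upwards [hmem] with z hz hzI
    rw [norm_of_nonneg (by positivity)]
    exact rpow_abs_rescaledWeight_sub_limitProfile_le hp (hz hzI).1 (hz hzI).2 ha.1 ha.2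
  have hint : IntervalIntegrable (fun z : ℝ => (2 * (1 + 2 * p)) ^ p * (-z) ^ (-(1 / 2) : ℝ))
      volume (-1) 0 := by
    have h := (IntervalIntegrable.iff_comp_neg (by simp)).mp
      (intervalIntegral.intervalIntegrable_rpow' (a := 0) (b := 1) (r := -(1 / 2)) (by norm_num))
    rw [neg_zero] at h
    exact h.symm.const_mul _
  have hlim : ∀ᵐ z : ℝ, z ∈ Ι (-1 : ℝ) 0 →
      Tendsto (fun a => |rescaledWeight a (-z) - limitProfile (-z)| ^ p) (𝓝[>] 0) (𝓝 0) := by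
    filter_upwards [hmem] with z hz hzI
    have hdiff := (tendsto_rescaledWeight (hz hzI).1).sub_const (limitProfile (-z))
    rw [sub_self] at hdiff
    simpa [Function.comp_def, zero_rpow hp.ne'] using
      ((continuous_abs.rpow_const fun _ => Or.inr hp.le).tendsto 0).comp hdiff
  simpa using intervalIntegral.tendsto_integral_filter_of_dominated_convergence _
    (Eventually.of_forall hmeas) hbound hint hlim

lemma tendsto_sq_nhdsWithin_Ioo_nhdsGT :
    Tendsto (fun k : ℝ => k ^ 2) (𝓝[Ioo 0 1] 0) (𝓝[>] 0) := by
  refine tendsto_nhdsWithin_iff.mpr ⟨?_, ?_⟩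
  · exact ((continuous_pow 2).tendsto' 0 0 (zero_pow two_ne_zero)).mono_left nhdsWithin_le_nhds
  · filter_upwards [self_mem_nhdsWithin] with k hk
    exact pow_pos hk.1 2

/-- Lemma B.8: `L^p((-1,0))` convergence, as `k → 0⁺` (with `k ∈ (0,1)`), of
`f_k(ẑ) = (1/(k²(1−k²))) ((1−|ẑ|^{k²}) − k²(1−|ẑ|))/(1−|ẑ|)²` to
`g(ẑ) = (−1−ẑ−ln|ẑ|)/(1−|ẑ|)²`, where `|ẑ| = −ẑ`. -/
theorem stmt5 (p : ℝ) (hp : 1 ≤ p) :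
    Filter.Tendsto
      (fun k : ℝ =>
        ∫ z in (-1:ℝ)..0,
          |(1 / (k ^ 2 * (1 - k ^ 2)))
              * ((1 - (-z) ^ (k ^ 2)) - k ^ 2 * (1 - (-z))) / (1 - (-z)) ^ 2
            - (-1 - z - Real.log (-z)) / (1 - (-z)) ^ 2| ^ p)
      (nhdsWithin 0 (Set.Ioo (0:ℝ) 1)) (nhds 0) := by
  refine ((tendsto_intervalIntegral_rpow_abs_rescaledWeight_sub_limitProfile
    (by linarith)).comp tendsto_sq_nhdsWithin_Ioo_nhdsGT).congr fun k => ?_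
  have hswap (z : ℝ) : -z - 1 = -1 - z := by ring
  simp only [Function.comp_apply, rescaledWeight, limitProfile, hswap]
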